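/- arXiv:2207.07208 — 3 statements merged into one kernel-verified Lean document; each statement's English description precedes it below -/
import Mathlib

section
/- Let z, w_i, w_j ∈ ℝ^d with w_i ≠ w_j, and let q ∈ [1,∞] with dual exponent q*. Then the infimum of ‖x − z‖_q over all x ∈ ℝ^d satisfying ‖x − w_i‖₂ ≥ ‖x − w_j‖₂ equals max{0, (‖z − w_j‖₂² − ‖z − w_i‖₂²) / (2‖w_j − w_i‖_{q*})}, and this infimum is attained. -/
noncomputable def lpnorm (p : ENNReal) [Fact (1 ≤ p)] {n : ℕ} (x : Fin n → ℝ) : ℝ :=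
  ‖(WithLp.equiv p (Fin n → ℝ)).symm x‖

/-!
Writing `a = wj - wi`, the condition `‖x - wi‖₂ ≥ ‖x - wj‖₂` is the affine half-space
`⟪x - z, a⟫ ≥ c` with `c = (‖z - wj‖₂² - ‖z - wi‖₂²) / 2`. Hölder's inequality
`⟪y, a⟫ ≤ ‖y‖_q ‖a‖_{q*}` shows that every point of it is at `ℓ_q`-distance at least
`c / ‖a‖_{q*}` from `z`; conversely, moving from `z` by `max 0 (c / ‖a‖_{q*})` times a
`q`-unit vector `u` with `⟪u, a⟫ = ‖a‖_{q*}` (the equality case of Hölder) lands in the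
half-space.
-/

open scoped ENNReal

variable {n : ℕ}

section Basic

variable {p : ℝ≥0∞} [Fact (1 ≤ p)]

lemma lpnorm_eq_norm_toLp (x : Fin n → ℝ) : lpnorm p x = ‖WithLp.toLp p x‖ := rfl

lemma lpnorm_nonneg (x : Fin n → ℝ) : 0 ≤ lpnorm p x := norm_nonneg _

@[simp] lemma lpnorm_zero : lpnorm p (0 : Fin n → ℝ) = 0 := by
  simp [lpnorm_eq_norm_toLp]

lemma lpnorm_pos {x : Fin n → ℝ} (hx : x ≠ 0) : 0 < lpnorm p x := by
  simpa [lpnorm_eq_norm_toLp] using hx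

lemma lpnorm_smul (t : ℝ) (x : Fin n → ℝ) : lpnorm p (t • x) = |t| * lpnorm p x := by
  simp [lpnorm_eq_norm_toLp, WithLp.toLp_smul, norm_smul]

lemma lpnorm_eq_sum (hp : p ≠ ∞) (x : Fin n → ℝ) :
    lpnorm p x = (∑ i, |x i| ^ p.toReal) ^ (1 / p.toReal) := by
  have hp0 : 0 < p.toReal := ENNReal.toReal_pos (zero_lt_one.trans_le Fact.out).ne' hp
  simp [lpnorm_eq_norm_toLp, PiLp.norm_eq_sum hp0]

lemma lpnorm_rpow_eq_sum (hp : p ≠ ∞) (x : Fin n → ℝ) :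
    lpnorm p x ^ p.toReal = ∑ i, |x i| ^ p.toReal := by
  have hp0 : p.toReal ≠ 0 := (ENNReal.toReal_pos (zero_lt_one.trans_le Fact.out).ne' hp).ne'
  rw [lpnorm_eq_sum hp, ← Real.rpow_mul (by positivity), one_div_mul_cancel hp0, Real.rpow_one]

end Basic

lemma lpnorm_one_eq_sum (x : Fin n → ℝ) : lpnorm 1 x = ∑ i, |x i| := by
  simp [lpnorm_eq_norm_toLp, PiLp.norm_eq_of_L1]

lemma lpnorm_top_eq_norm (x : Fin n → ℝ) : lpnorm ∞ x = ‖x‖ := by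
  simp [lpnorm_eq_norm_toLp]

lemma lpnorm_two_sq (x : Fin n → ℝ) : lpnorm 2 x ^ 2 = x ⬝ᵥ x := by
  rw [lpnorm_eq_norm_toLp, PiLp.norm_sq_eq_of_L2]
  simp [dotProduct, sq]

lemma lpnorm_two_sub_le_iff_le_dotProduct (x z wi wj : Fin n → ℝ) :
    lpnorm 2 (x - wj) ≤ lpnorm 2 (x - wi) ↔
      (lpnorm 2 (z - wj) ^ 2 - lpnorm 2 (z - wi) ^ 2) / 2 ≤ (x - z) ⬝ᵥ (wj - wi) := by
  have hpolar : (x - wi) ⬝ᵥ (x - wi) - (x - wj) ⬝ᵥ (x - wj) =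
      2 * ((x - z) ⬝ᵥ (wj - wi)) - ((z - wj) ⬝ᵥ (z - wj) - (z - wi) ⬝ᵥ (z - wi)) := by
    simp only [dotProduct, Pi.sub_apply, ← Finset.sum_sub_distrib, Finset.mul_sum]
    exact Finset.sum_congr rfl fun k _ => by ring
  rw [← sq_le_sq₀ (lpnorm_nonneg _) (lpnorm_nonneg _)]
  simp only [lpnorm_two_sq]
  constructor <;> intro h <;> linarith

section HolderEndpoint

lemma abs_sign_le_one (x : ℝ) : |(SignType.sign x : ℝ)| ≤ 1 := by
  rcases SignType.sign x with _ | _ | _ <;> simp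

lemma dotProduct_le_lpnorm_top_mul_lpnorm_one (u a : Fin n → ℝ) :
    u ⬝ᵥ a ≤ lpnorm ∞ u * lpnorm 1 a := by
  rw [lpnorm_top_eq_norm, lpnorm_one_eq_sum, Finset.mul_sum]
  refine Finset.sum_le_sum fun k _ => ?_
  calc u k * a k ≤ |u k| * |a k| := by rw [← abs_mul]; exact le_abs_self _
    _ ≤ ‖u‖ * |a k| := by gcongr; exact norm_le_pi_norm u k

lemma exists_lpnorm_one_le_one_dotProduct_eq (a : Fin n → ℝ) :
    ∃ u, lpnorm 1 u ≤ 1 ∧ u ⬝ᵥ a = lpnorm ∞ a := by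
  rcases isEmpty_or_nonempty (Fin n) with _ | _
  · exact ⟨0, by simp, by simp [Subsingleton.elim a 0]⟩
  obtain ⟨⟨k, hk⟩, -⟩ := IsGreatest.pi_norm a
  refine ⟨Pi.single k (SignType.sign (a k) : ℝ), ?_, ?_⟩
  · exact (PiLp.norm_single 1 (fun _ => ℝ) k _).trans_le (abs_sign_le_one _)
  · rw [single_dotProduct, sign_mul_self, lpnorm_top_eq_norm, ← hk]
    rfl

lemma exists_lpnorm_top_le_one_dotProduct_eq (a : Fin n → ℝ) :
    ∃ u, lpnorm ∞ u ≤ 1 ∧ u ⬝ᵥ a = lpnorm 1 a := by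
  refine ⟨fun k => SignType.sign (a k), ?_, ?_⟩
  · rw [lpnorm_top_eq_norm, pi_norm_le_iff_of_nonneg zero_le_one]
    exact fun k => abs_sign_le_one (a k)
  · simp only [dotProduct, sign_mul_self, lpnorm_one_eq_sum]

end HolderEndpoint

lemma exists_lpnorm_le_one_dotProduct_eq_of_holderConjugate {p s : ℝ≥0∞} [Fact (1 ≤ p)]
    [Fact (1 ≤ s)] (hps : p.toReal.HolderConjugate s.toReal) (a : Fin n → ℝ) :
    ∃ u, lpnorm p u ≤ 1 ∧ u ⬝ᵥ a = lpnorm s a := by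
  rcases eq_or_ne a 0 with rfl | ha
  · exact ⟨0, by simp, by simp⟩
  have hp : p ≠ ∞ := (ENNReal.toReal_pos_iff.mp hps.pos).2.ne
  have hs : s ≠ ∞ := (ENNReal.toReal_pos_iff.mp hps.symm.pos).2.ne
  set S := s.toReal
  set N := lpnorm s a
  have hN : 0 < N := lpnorm_pos ha
  have hS : 1 < S := hps.symm.lt
  -- Hölder's equality case: `v k = a k |a k| ^ (S - 2)` satisfies
  -- `|v k| ^ p.toReal = |a k| ^ S = v k * a k`.
  set v : Fin n → ℝ := fun k => a k * |a k| ^ (S - 2)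
  have hv_abs (k : Fin n) : |v k| = |a k| ^ (S - 1) := by
    calc |v k| = |a k| ^ (1 : ℝ) * |a k| ^ (S - 2) := by
          rw [abs_mul, abs_of_nonneg (Real.rpow_nonneg (abs_nonneg (a k)) _), Real.rpow_one]
      _ = |a k| ^ (S - 1) := by
          rw [← Real.rpow_add' (abs_nonneg _) (by linarith)]; ring_nf
  have hv_mul (k : Fin n) : v k * a k = |a k| ^ S := by
    have hnonneg : 0 ≤ v k * a k := by
      rw [mul_right_comm]; exact mul_nonneg (mul_self_nonneg _) (by positivity)
    rw [← abs_of_nonneg hnonneg, abs_mul, hv_abs,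
      ← Real.rpow_add_one' (abs_nonneg _) (by linarith), sub_add_cancel]
  have hsum : ∑ k, |a k| ^ S = N ^ S := (lpnorm_rpow_eq_sum hs a).symm
  have hva : v ⬝ᵥ a = N ^ S := by simp only [dotProduct, hv_mul, hsum]
  have hv : lpnorm p v = N ^ (S - 1) := by
    simp_rw [lpnorm_eq_sum hp, hv_abs, ← Real.rpow_mul (abs_nonneg _),
      hps.symm.sub_one_mul_conj, hsum, ← Real.rpow_mul hN.le, mul_one_div,
      hps.symm.div_conj_eq_sub_one]
  refine ⟨(N ^ (S - 1))⁻¹ • v, ?_, ?_⟩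
  · rw [lpnorm_smul, hv, abs_inv, abs_of_pos (by positivity), inv_mul_cancel₀ (by positivity)]
  · rw [smul_dotProduct, hva, smul_eq_mul, Real.rpow_sub_one hN.ne']
    field_simp

section HolderConjugate

variable {q qs : ℝ≥0∞} [Fact (1 ≤ q)] [Fact (1 ≤ qs)] [q.HolderConjugate qs]

theorem dotProduct_le_lpnorm_mul_lpnorm (u a : Fin n → ℝ) :
    u ⬝ᵥ a ≤ lpnorm q u * lpnorm qs a := by
  rcases eq_or_ne q ∞ with rfl | hq
  · obtain rfl : qs = 1 := (ENNReal.HolderConjugate.eq_top_iff_eq_one ∞ qs).mp rfl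
    exact dotProduct_le_lpnorm_top_mul_lpnorm_one u a
  rcases eq_or_ne qs ∞ with rfl | hqs
  · obtain rfl : q = 1 := (ENNReal.HolderConjugate.eq_top_iff_eq_one ∞ q).mp rfl
    rw [dotProduct_comm, mul_comm]
    exact dotProduct_le_lpnorm_top_mul_lpnorm_one a u
  rw [lpnorm_eq_sum hq, lpnorm_eq_sum hqs]
  exact Real.inner_le_Lp_mul_Lq _ u a (ENNReal.HolderConjugate.toReal_of_ne_top hq hqs)

theorem exists_lpnorm_le_one_dotProduct_eq (a : Fin n → ℝ) :
    ∃ u, lpnorm q u ≤ 1 ∧ u ⬝ᵥ a = lpnorm qs a := by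
  rcases eq_or_ne q ∞ with rfl | hq
  · obtain rfl : qs = 1 := (ENNReal.HolderConjugate.eq_top_iff_eq_one ∞ qs).mp rfl
    exact exists_lpnorm_top_le_one_dotProduct_eq a
  rcases eq_or_ne qs ∞ with rfl | hqs
  · obtain rfl : q = 1 := (ENNReal.HolderConjugate.eq_top_iff_eq_one ∞ q).mp rfl
    exact exists_lpnorm_one_le_one_dotProduct_eq a
  exact exists_lpnorm_le_one_dotProduct_eq_of_holderConjugate
    (ENNReal.HolderConjugate.toReal_of_ne_top hq hqs) a

theorem isLeast_lpnorm_sub_of_le_dotProduct (z : Fin n → ℝ) {a : Fin n → ℝ} (ha : a ≠ 0)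
    (c : ℝ) :
    IsLeast {r : ℝ | ∃ x : Fin n → ℝ, c ≤ (x - z) ⬝ᵥ a ∧ r = lpnorm q (x - z)}
      (max 0 (c / lpnorm qs a)) := by
  have hN : 0 < lpnorm qs a := lpnorm_pos ha
  have lower (x : Fin n → ℝ) (hx : c ≤ (x - z) ⬝ᵥ a) :
      max 0 (c / lpnorm qs a) ≤ lpnorm q (x - z) :=
    max_le (lpnorm_nonneg _)
      ((div_le_iff₀ hN).mpr (hx.trans (dotProduct_le_lpnorm_mul_lpnorm _ _)))
  refine ⟨?_, fun r ⟨x, hx, hr⟩ => hr ▸ lower x hx⟩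
  obtain ⟨u, hu, hua⟩ := exists_lpnorm_le_one_dotProduct_eq (q := q) (qs := qs) a
  set t := max 0 (c / lpnorm qs a)
  have ht : 0 ≤ t := le_max_left _ _
  have hx : c ≤ (z + t • u - z) ⬝ᵥ a := by
    rw [add_sub_cancel_left, smul_dotProduct, hua, smul_eq_mul, ← div_le_iff₀ hN]
    exact le_max_right _ _
  refine ⟨z + t • u, hx, le_antisymm (lower _ hx) ?_⟩
  calc lpnorm q (z + t • u - z) = t * lpnorm q u := by
        rw [add_sub_cancel_left, lpnorm_smul, abs_of_nonneg ht]
    _ ≤ t := mul_le_of_le_one_right ht hu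

end HolderConjugate

/-- The ℓ_q distance of `z` to the half-space `{x : ‖x-wi‖₂ ≥ ‖x-wj‖₂}` is attained and
equals `max 0 ((‖z-wj‖₂² - ‖z-wi‖₂²)/(2‖wj-wi‖_{q*}))`. -/
theorem lq_distance_to_halfspace_eq {n : ℕ} (q qs : ENNReal)
    [Fact (1 ≤ q)] [Fact (1 ≤ qs)] (hconj : 1 / q + 1 / qs = 1)
    (z wi wj : Fin n → ℝ) (hne : wi ≠ wj) :
    IsLeast {r : ℝ | ∃ x : Fin n → ℝ, lpnorm 2 (x - wi) ≥ lpnorm 2 (x - wj) ∧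
        r = lpnorm q (x - z)}
      (max 0 ((lpnorm 2 (z - wj) ^ 2 - lpnorm 2 (z - wi) ^ 2) /
        (2 * lpnorm qs (wj - wi)))) := by
  have : q.HolderConjugate qs :=
    ENNReal.holderConjugate_iff.mpr (by simpa only [one_div] using hconj)
  have key := isLeast_lpnorm_sub_of_le_dotProduct (q := q) (qs := qs) z
    (sub_ne_zero.mpr hne.symm) ((lpnorm 2 (z - wj) ^ 2 - lpnorm 2 (z - wi) ^ 2) / 2)
  simpa only [ge_iff_le, lpnorm_two_sub_le_iff_le_dotProduct _ z, div_div] using key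
end

section
/- In the setting of the previous statement, suppose the min-max lower bound is realized by the pair (i*, j*) and that some minimizer x* of ρ_{i*,j*} satisfies ‖x* − w_i‖_p ≥ ‖x* − w_{j*}‖_p for all i ∈ I_y. Then min_{j∈I_y^c} r_j = min_{j∈I_y^c} max_{i∈I_y} ρ_{i,j}; i.e., the lower bound is tight. -/
/-- If a minimizer of the relaxed problem realizing the min-max lower bound is feasible
for the full problem, then the min-max lower bound is tight. -/
theorem minmax_relaxation_tight {n : ℕ} (p q : ENNReal) [Fact (1 ≤ p)] [Fact (1 ≤ q)]
    {ι : Type*} (w : ι → (Fin n → ℝ)) (Iy Ic : Finset ι) (hy : Iy.Nonempty) (hc : Ic.Nonempty)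
    (X : Set (Fin n → ℝ)) (hX : X.Nonempty) (z : Fin n → ℝ)
    (ρ : ι → ι → ENNReal)
    (hρ : ∀ i j, ρ i j =
      ⨅ x : {x : Fin n → ℝ // x ∈ X ∧ lpnorm p (x - w i) ≥ lpnorm p (x - w j)},
        ENNReal.ofReal (lpnorm q ((x : Fin n → ℝ) - z)))
    (istar jstar : ι) (histar : istar ∈ Iy) (hjstar : jstar ∈ Ic)
    (hrealize : Ic.inf' hc (fun j => Iy.sup' hy (fun i => ρ i j)) = ρ istar jstar)
    (xstar : Fin n → ℝ) (hxX : xstar ∈ X)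
    (hxval : ENNReal.ofReal (lpnorm q (xstar - z)) = ρ istar jstar)
    (hxfeas : ∀ i ∈ Iy, lpnorm p (xstar - w i) ≥ lpnorm p (xstar - w jstar)) :
    Ic.inf' hc (fun j =>
        ⨅ x : {x : Fin n → ℝ // x ∈ X ∧ ∀ i ∈ Iy, lpnorm p (x - w i) ≥ lpnorm p (x - w j)},
          ENNReal.ofReal (lpnorm q ((x : Fin n → ℝ) - z))) =
      Ic.inf' hc (fun j => Iy.sup' hy (fun i => ρ i j)) := by
  apply le_antisymm
  · rw [hrealize, ← hxval]
    refine le_trans (Finset.inf'_le _ hjstar) ?_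
    exact iInf_le (fun x : {x : Fin n → ℝ // x ∈ X ∧ ∀ i ∈ Iy,
      lpnorm p (x - w i) ≥ lpnorm p (x - w jstar)} =>
      ENNReal.ofReal (lpnorm q ((x : Fin n → ℝ) - z))) ⟨xstar, hxX, hxfeas⟩
  · refine Finset.le_inf' _ _ (fun j hj => ?_)
    refine le_trans (Finset.inf'_le _ hj) (Finset.sup'_le hy _ (fun i hi => ?_))
    rw [hρ i j]
    refine le_iInf (fun x => ?_)
    exact iInf_le (fun y : {y : Fin n → ℝ // y ∈ X ∧
      lpnorm p (y - w i) ≥ lpnorm p (y - w j)} =>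
      ENNReal.ofReal (lpnorm q ((y : Fin n → ℝ) - z))) ⟨x, x.2.1, x.2.2 i hi⟩
end

section
/- Let u, v, z ∈ ℝ^d and suppose x ∈ ℝ^d satisfies ‖x − u‖_∞ ≥ ‖x − v‖_∞. Define x' by x'^{(l)} = x^{(l)} + α·sign(v^{(l)} − u^{(l)}) for one fixed coordinate l and x'^{(k)} = x^{(k)} for k ≠ l, where α > 0. Then ‖x' − u‖_∞ ≥ ‖x' − v‖_∞. -/
/-- Monotonicity lemma: moving a feasible point of the ℓ_∞ decision-region constraint
one coordinate further in the direction `sign (v - u)` preserves feasibility.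
Here `‖·‖` on `Fin d → ℝ` is the sup-norm. -/
theorem linf_feasibility_monotone {d : ℕ} (u v z x : Fin d → ℝ)
    (hx : ‖x - u‖ ≥ ‖x - v‖) (l : Fin d) (α : ℝ) (hα : 0 < α) :
    ‖Function.update x l (x l + α * Real.sign (v l - u l)) - u‖ ≥
      ‖Function.update x l (x l + α * Real.sign (v l - u l)) - v‖ := by
  set s : ℝ := Real.sign (v l - u l) with hs
  set x' : Fin d → ℝ := Function.update x l (x l + α * s) with hx'def
  have hne : ∀ k, k ≠ l → x' k = x k := fun k hk => Function.update_of_ne hk _ _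
  have hxl : x' l = x l + α * s := Function.update_self _ _ _
  have hnn : (0 : ℝ) ≤ ‖x' - u‖ := norm_nonneg _
  have hcoordu : ∀ k, |x' k - u k| ≤ ‖x' - u‖ := by
    intro k
    simpa [Real.norm_eq_abs] using norm_le_pi_norm (x' - u) k
  have hcoordxu : ∀ k, |x k - u k| ≤ ‖x - u‖ := by
    intro k
    simpa [Real.norm_eq_abs] using norm_le_pi_norm (x - u) k
  have hcoordxv : ∀ k, |x k - v k| ≤ ‖x - v‖ := by
    intro k
    simpa [Real.norm_eq_abs] using norm_le_pi_norm (x - v) k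
  -- Lemma A : ‖x - u‖ ≤ ‖x' - u‖
  have hA : ‖x - u‖ ≤ ‖x' - u‖ := by
    obtain ⟨m, -, hm⟩ := Finset.exists_max_image Finset.univ
      (fun k => |x k - u k|) ⟨l, Finset.mem_univ l⟩
    have hmax : ‖x - u‖ ≤ |x m - u m| := by
      rw [pi_norm_le_iff_of_nonneg (abs_nonneg _)]
      intro i
      simpa [Real.norm_eq_abs] using hm i (Finset.mem_univ i)
    by_cases hml : m = l
    · subst hml
      -- at the maximizing coordinate m we have |x m - v m| ≤ |x m - u m|
      have h2 : |x m - v m| ≤ |x m - u m| := by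
        calc |x m - v m| ≤ ‖x - v‖ := hcoordxv m
        _ ≤ ‖x - u‖ := hx
        _ ≤ |x m - u m| := hmax
      have hkey : |x m - u m| ≤ |x m + α * s - u m| := by
        rcases lt_trichotomy (v m - u m) 0 with hvu | hvu | hvu
        · have hs1 : s = -1 := by rw [hs, Real.sign_of_neg hvu]
          rw [hs1]
          have h3 : x m - u m ≤ 0 := by
            by_contra h
            push_neg at h
            rw [abs_of_pos h, abs_of_pos (by linarith : 0 < x m - v m)] at h2
            linarith
          rw [abs_of_nonpos h3, abs_of_nonpos (by nlinarith)]
          nlinarith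
        · have hs0 : s = 0 := by rw [hs, hvu, Real.sign_zero]
          rw [hs0]
          simp
        · have hs1 : s = 1 := by rw [hs, Real.sign_of_pos hvu]
          rw [hs1]
          have h3 : 0 ≤ x m - u m := by
            by_contra h
            push_neg at h
            rw [abs_of_neg h, abs_of_neg (by linarith : x m - v m < 0)] at h2
            linarith
          rw [abs_of_nonneg h3, abs_of_nonneg (by nlinarith)]
          nlinarith
      calc ‖x - u‖ ≤ |x m - u m| := hmax
      _ ≤ |x m + α * s - u m| := hkey
      _ = |x' m - u m| := by rw [hxl]
      _ ≤ ‖x' - u‖ := hcoordu m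
    · calc ‖x - u‖ ≤ |x m - u m| := hmax
      _ = |x' m - u m| := by rw [hne m hml]
      _ ≤ ‖x' - u‖ := hcoordu m
  -- main goal: each coordinate of x' - v is bounded by ‖x' - u‖
  rw [ge_iff_le, pi_norm_le_iff_of_nonneg hnn]
  intro k
  rw [Pi.sub_apply, Real.norm_eq_abs]
  by_cases hkl : k = l
  · subst hkl
    rw [hxl]
    rcases lt_trichotomy (v k - u k) 0 with hvu | hvu | hvu
    · have hs1 : s = -1 := by rw [hs, Real.sign_of_neg hvu]
      rw [hs1]
      by_cases hc : v k ≤ x k - α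
      · calc |x k + α * (-1) - v k| = x k + α * (-1) - v k := abs_of_nonneg (by linarith)
        _ ≤ |x k - v k| := by rw [abs_of_nonneg (by linarith)]; linarith
        _ ≤ ‖x - v‖ := hcoordxv k
        _ ≤ ‖x - u‖ := hx
        _ ≤ ‖x' - u‖ := hA
      · push_neg at hc
        calc |x k + α * (-1) - v k| = -(x k + α * (-1) - v k) := abs_of_neg (by linarith)
        _ ≤ |x k + α * (-1) - u k| := by rw [abs_of_nonpos (by linarith)]; linarith
        _ = |x' k - u k| := by rw [hxl, hs1]
        _ ≤ ‖x' - u‖ := hcoordu k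
    · have hs0 : s = 0 := by rw [hs, hvu, Real.sign_zero]
      have huv : u k = v k := by linarith
      rw [hs0, ← huv]
      calc |x k + α * 0 - u k| = |x' k - u k| := by rw [hxl, hs0]
      _ ≤ ‖x' - u‖ := hcoordu k
    · have hs1 : s = 1 := by rw [hs, Real.sign_of_pos hvu]
      rw [hs1]
      by_cases hc : x k + α ≤ v k
      · calc |x k + α * 1 - v k| = -(x k + α * 1 - v k) := abs_of_nonpos (by linarith)
        _ ≤ |x k - v k| := by rw [abs_of_nonpos (by linarith)]; linarith
        _ ≤ ‖x - v‖ := hcoordxv k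
        _ ≤ ‖x - u‖ := hx
        _ ≤ ‖x' - u‖ := hA
      · push_neg at hc
        calc |x k + α * 1 - v k| = x k + α * 1 - v k := abs_of_nonneg (by linarith)
        _ ≤ |x k + α * 1 - u k| := by rw [abs_of_nonneg (by linarith)]; linarith
        _ = |x' k - u k| := by rw [hxl, hs1]
        _ ≤ ‖x' - u‖ := hcoordu k
  · rw [hne k hkl]
    calc |x k - v k| ≤ ‖x - v‖ := hcoordxv k
    _ ≤ ‖x - u‖ := hx
    _ ≤ ‖x' - u‖ := hA
end
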